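/- On the unit sphere S³ = {|z|=1} ⊂ C², the tangential Dirac operator ∂̸ = [[−θ/2, e₊],[−e₋, θ/2]] satisfies ∂̸ φ^{+(m,l,k)} = (m/2) φ^{+(m,l,k)}, i.e. the spinors φ^{+(m,l,k)} are eigenspinors with eigenvalue m/2. -/

import Mathlib

open MvPolynomial

/- Variables: index 0 ↦ z₁, 1 ↦ z₂, 2 ↦ z̄₁, 3 ↦ z̄₂ in `ℂ[z₁, z₂, z̄₁, z̄₂]`. -/

/-- `e₊ = -z₂ ∂/∂z̄₁ + z₁ ∂/∂z̄₂`. -/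
noncomputable def ePlus : Derivation ℂ (MvPolynomial (Fin 4) ℂ) (MvPolynomial (Fin 4) ℂ) :=
  mkDerivation ℂ ![0, 0, -(X 1), X 0]

/-- `e₋ = -z̄₂ ∂/∂z₁ + z̄₁ ∂/∂z₂`. -/
noncomputable def eMinus : Derivation ℂ (MvPolynomial (Fin 4) ℂ) (MvPolynomial (Fin 4) ℂ) :=
  mkDerivation ℂ ![-(X 3), X 2, 0, 0]

/-- `θ = z₁ ∂/∂z₁ + z₂ ∂/∂z₂ - z̄₁ ∂/∂z̄₁ - z̄₂ ∂/∂z̄₂`. -/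
noncomputable def thetaD : Derivation ℂ (MvPolynomial (Fin 4) ℂ) (MvPolynomial (Fin 4) ℂ) :=
  mkDerivation ℂ ![X 0, X 1, -(X 2), -(X 3)]

/-- `v^k_{(l, m-l)} = (e₋)^k (z₁^l z₂^{m-l})`. -/
noncomputable def v (m l k : ℕ) : MvPolynomial (Fin 4) ℂ :=
  (fun p => eMinus p)^[k] (X 0 ^ l * X 1 ^ (m - l))

/-! `θ`, `-e₊`, `e₋` form an `sl₂`-triple of derivations of `ℂ[z₁, z₂, z̄₁, z̄₂]`, and
`z₁^l z₂^(m-l)` is a primitive vector of weight `m` for it (`e₊` kills holomorphic polynomials).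
The `sl₂` relations then give `θ v^k = (m - 2k) v^k` and `e₊ v^(k+1) = -(k+1)(m-k) v^k`, after
which both components of the eigen-equation are identities between scalar multiples of `v^(k-1)`
and `v^k`. -/

namespace Derivation

variable {R A : Type*} [CommSemiring R] [CommSemiring A] [Algebra R A] (D : Derivation R A A)
  {a b : A} {c d : R}

lemma map_mul_of_eq_smul (ha : D a = c • a) (hb : D b = d • b) :
    D (a * b) = (c + d) • (a * b) := by
  rw [leibniz, ha, hb, smul_eq_mul, smul_eq_mul, mul_smul_comm, mul_smul_comm, mul_comm b,
    add_smul, add_comm]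

lemma map_pow_of_eq_smul (ha : D a = c • a) (n : ℕ) : D (a ^ n) = (n * c) • a ^ n := by
  induction n with
  | zero => simp
  | succ n ih => rw [pow_succ, map_mul_of_eq_smul D ih ha, Nat.cast_succ, add_one_mul]

end Derivation

lemma isSl2Triple_thetaD_neg_ePlus_eMinus : IsSl2Triple thetaD (-ePlus) eMinus where
  h_ne_zero h := by
    simpa [thetaD, mkDerivation_X] using congrArg (· (X 0 : MvPolynomial (Fin 4) ℂ)) h
  lie_e_f := by
    ext i
    fin_cases i <;> simp [Derivation.commutator_apply, thetaD, eMinus, ePlus, mkDerivation_X]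
  lie_h_e_nsmul := by
    ext i
    fin_cases i <;> simp [Derivation.commutator_apply, thetaD, ePlus, mkDerivation_X, two_smul]
    ring
  lie_h_f_nsmul := by
    ext i
    fin_cases i <;> simp [Derivation.commutator_apply, thetaD, eMinus, mkDerivation_X, two_smul]
    ring

lemma hasPrimitiveVectorWith_X_zero_pow_mul_X_one_pow {l m : ℕ} (hl : l ≤ m) :
    isSl2Triple_thetaD_neg_ePlus_eMinus.HasPrimitiveVectorWith
      (X 0 ^ l * X 1 ^ (m - l) : MvPolynomial (Fin 4) ℂ) (m : ℂ) where
  ne_zero := mul_ne_zero (pow_ne_zero _ (X_ne_zero _)) (pow_ne_zero _ (X_ne_zero _))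
  lie_h := by
    obtain ⟨h0, h1⟩ : thetaD (X 0 : MvPolynomial (Fin 4) ℂ) = (1 : ℂ) • X 0 ∧
        thetaD (X 1 : MvPolynomial (Fin 4) ℂ) = (1 : ℂ) • X 1 := by
      simp [thetaD, mkDerivation_X]
    rw [Derivation.bracket_eq_fun, Derivation.map_mul_of_eq_smul _
      (Derivation.map_pow_of_eq_smul _ h0 _) (Derivation.map_pow_of_eq_smul _ h1 _)]
    push_cast [hl]
    ring_nf
  lie_e := by
    obtain ⟨h0, h1⟩ : ePlus (X 0 : MvPolynomial (Fin 4) ℂ) = (0 : ℂ) • X 0 ∧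
        ePlus (X 1 : MvPolynomial (Fin 4) ℂ) = (0 : ℂ) • X 1 := by
      simp [ePlus, mkDerivation_X]
    rw [Derivation.bracket_eq_fun, Derivation.neg_apply, Derivation.map_mul_of_eq_smul _
      (Derivation.map_pow_of_eq_smul _ h0 _) (Derivation.map_pow_of_eq_smul _ h1 _)]
    simp

lemma v_eq_pow_toEnd (m l k : ℕ) :
    v m l k = (LieModule.toEnd ℂ _ _ eMinus ^ k) (X 0 ^ l * X 1 ^ (m - l)) := by
  rw [Module.End.coe_pow]
  rfl

lemma eMinus_v (m l k : ℕ) : eMinus (v m l k) = v m l (k + 1) := by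
  simp [v, Function.iterate_succ_apply']

lemma thetaD_v {m l : ℕ} (hl : l ≤ m) (k : ℕ) :
    thetaD (v m l k) = ((m : ℂ) - 2 * k) • v m l k := by
  rw [v_eq_pow_toEnd]
  exact (hasPrimitiveVectorWith_X_zero_pow_mul_X_one_pow hl).lie_h_pow_toEnd_f k

lemma ePlus_v_zero {m l : ℕ} (hl : l ≤ m) : ePlus (v m l 0) = 0 := by
  have h := (hasPrimitiveVectorWith_X_zero_pow_mul_X_one_pow hl).lie_e
  rwa [Derivation.bracket_eq_fun, Derivation.neg_apply, neg_eq_zero] at h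

lemma ePlus_v_succ {m l : ℕ} (hl : l ≤ m) (k : ℕ) :
    ePlus (v m l (k + 1)) = -(((k : ℂ) + 1) * (m - k)) • v m l k := by
  rw [v_eq_pow_toEnd, v_eq_pow_toEnd, neg_smul,
    ← (hasPrimitiveVectorWith_X_zero_pow_mul_X_one_pow hl).lie_e_pow_succ_toEnd_f k,
    Derivation.bracket_eq_fun, Derivation.neg_apply, neg_neg]

theorem phiPlus_eigenspinor_general (m l k : ℕ) (hl : l ≤ m) :
    ((-(1 / 2 : ℂ)) • thetaD ((k : ℂ) • v m l (k - 1)) + ePlus (-(v m l k))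
        = ((m : ℂ) / 2) • ((k : ℂ) • v m l (k - 1))) ∧
    (-(eMinus ((k : ℂ) • v m l (k - 1))) + (1 / 2 : ℂ) • thetaD (-(v m l k))
        = ((m : ℂ) / 2) • (-(v m l k))) := by
  rcases k with _ | k
  · simp only [Nat.cast_zero, zero_smul, map_zero, map_neg, ePlus_v_zero hl, thetaD_v hl]
    constructor <;> module
  · simp only [Nat.add_sub_cancel, Derivation.map_smul, map_neg, thetaD_v hl, ePlus_v_succ hl,
      eMinus_v]
    constructor <;> (push_cast; module)

/-- The spinor `φ^{+(m,l,k)} = (k v^{k-1}, -v^k)` is an eigenspinor of the tangential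
Dirac operator `∂̸ = [[-θ/2, e₊], [-e₋, θ/2]]` with eigenvalue `m/2`:
`∂̸ φ^{+(m,l,k)} = (m/2) φ^{+(m,l,k)}` (componentwise, as an algebraic identity). -/
theorem phiPlus_eigenspinor (m l k : ℕ) (hl : l ≤ m) (hk : k ≤ m + 1) :
    ((-(1 / 2 : ℂ)) • thetaD ((k : ℂ) • v m l (k - 1)) + ePlus (-(v m l k))
        = ((m : ℂ) / 2) • ((k : ℂ) • v m l (k - 1))) ∧
    (-(eMinus ((k : ℂ) • v m l (k - 1))) + (1 / 2 : ℂ) • thetaD (-(v m l k))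
        = ((m : ℂ) / 2) • (-(v m l k))) :=
  phiPlus_eigenspinor_general m l k hl
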